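/- arXiv:1403.4557 — 2 statements merged into one kernel-verified Lean document; each statement's English description precedes it below -/
import Mathlib

section
/- Assume n ≥ 2. The relation ∼ is symmetric: for all v_1, v_2 ∈ R, if v_1 ∼ v_2 then v_2 ∼ v_1. -/
abbrev Pt (p n : ℕ) := Fin n → ZMod p

/-- The left regular representation `R_L` of `(ℤ/pℤ)^n` inside `Sym(R)`: all translations. -/
def RL (p n : ℕ) : Subgroup (Equiv.Perm (Pt p n)) where
  carrier := {σ | ∃ r : Pt p n, ∀ x, σ x = r + x}
  one_mem' := ⟨0, fun x => by simp⟩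
  mul_mem' := by
    rintro a b ⟨r, hr⟩ ⟨s, hs⟩
    refine ⟨r + s, fun x => ?_⟩
    simp [Equiv.Perm.mul_apply, hr, hs, add_assoc]
  inv_mem' := by
    rintro a ⟨r, hr⟩
    refine ⟨-r, fun x => ?_⟩
    have h := hr (a⁻¹ x)
    rw [← Equiv.Perm.mul_apply, mul_inv_cancel, Equiv.Perm.one_apply] at h
    have h2 : -r + x = a⁻¹ x := by
      conv_lhs => rw [h]
      abel
    exact h2.symm

/-- The conjugate `π⁻¹ R_L π` of the left regular representation. -/
def RLpi (p n : ℕ) (π : Equiv.Perm (Pt p n)) : Subgroup (Equiv.Perm (Pt p n)) where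
  carrier := {σ | ∃ ρ ∈ RL p n, σ = π⁻¹ * ρ * π}
  one_mem' := ⟨1, one_mem _, by group⟩
  mul_mem' := by
    rintro a b ⟨r, hr, rfl⟩ ⟨s, hs, rfl⟩
    exact ⟨r * s, mul_mem hr hs, by group⟩
  inv_mem' := by
    rintro a ⟨r, hr, rfl⟩
    exact ⟨r⁻¹, inv_mem hr, by group⟩

/-- `σ` belongs to the 2-closure `G^{(2)}` of `G`. -/
def twoClosed {α : Type*} (G : Subgroup (Equiv.Perm α)) (σ : Equiv.Perm α) : Prop :=
  ∀ x y : α, ∃ g ∈ G, σ x = g x ∧ σ y = g y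

/-- The relation `∼`: `v₁ ∼ v₂` iff `C_{v₂}` is not contained in a single orbit
of the stabilizer `G_{v₁}`. -/
def simRel (p n : ℕ) (G : Subgroup (Equiv.Perm (Pt p n)))
    (Cb : Pt p n → Set (Pt p n)) (v₁ v₂ : Pt p n) : Prop :=
  ¬ ∀ x ∈ Cb v₂, ∃ g ∈ G, g v₁ = v₁ ∧ g v₂ = x

/-!
Since `G` contains all translations and the blocks of `ℬ₂` are `G`-invariant, the
translation `y ↦ v₁ - x + y` carries `x ∈ C_{v₂}` to `v₁`, so `v₁ + v₂ - x ∈ C_{v₁}`.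
An element of `G_{v₂}` sending `v₁` to `v₁ + v₂ - x`, followed by the translation by
`x - v₂`, fixes `v₁` and sends `v₂` to `x`.
-/

namespace Setoid.IsPartition

section

variable {α : Type*} {c : Set (Set α)} {C : α → Set α}

theorem mem_symm (hc : IsPartition c) (hC : ∀ w, C w ∈ c ∧ w ∈ C w) {a b : α}
    (hab : a ∈ C b) : b ∈ C a :=
  eq_of_mem_eqv_class hc.2 (hC a).1 (hC a).2 (hC b).1 hab ▸ (hC b).2

theorem apply_mem (hc : IsPartition c) (hC : ∀ w, C w ∈ c ∧ w ∈ C w) {f : α → α}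
    (hf : ∀ b ∈ c, f '' b ∈ c) {w z : α} (hz : z ∈ C w) : f z ∈ C (f w) := by
  have himage : f '' C w = C (f w) :=
    eq_of_mem_eqv_class hc.2 (hf _ (hC w).1) ⟨w, (hC w).2, rfl⟩ (hC (f w)).1 (hC (f w)).2
  exact himage ▸ ⟨z, hz, rfl⟩

end

theorem add_sub_mem {A : Type*} [AddCommGroup A] {c : Set (Set A)} {C : A → Set A}
    (hc : IsPartition c) (hC : ∀ w, C w ∈ c ∧ w ∈ C w)
    (htrans : ∀ r : A, ∀ b ∈ c, (r + ·) '' b ∈ c) {v₁ v₂ x : A} (hx : x ∈ C v₂) :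
    v₁ + v₂ - x ∈ C v₁ := by
  have h := hc.apply_mem hC (htrans (v₁ - x)) hx
  simp only [sub_add_cancel, sub_add_eq_add_sub] at h
  exact hc.mem_symm hC h

end Setoid.IsPartition

theorem exists_fix_apply_eq_of_addLeft_mem {A : Type*} [AddCommGroup A]
    {G : Subgroup (Equiv.Perm A)} (htrans : ∀ r : A, Equiv.addLeft r ∈ G) {v₁ v₂ x : A}
    (h : ∃ g ∈ G, g v₂ = v₂ ∧ g v₁ = v₁ + v₂ - x) :
    ∃ g ∈ G, g v₁ = v₁ ∧ g v₂ = x := by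
  obtain ⟨g, hg, hgv₂, hgv₁⟩ := h
  refine ⟨Equiv.addLeft (x - v₂) * g, mul_mem (htrans _) hg, ?_, ?_⟩
  · simp only [Equiv.Perm.mul_apply, hgv₁, Equiv.coe_addLeft]
    abel
  · simp only [Equiv.Perm.mul_apply, hgv₂, Equiv.coe_addLeft, sub_add_cancel]

theorem stmt_13_general (p n : ℕ) (hn : 2 ≤ n)
    (π : Equiv.Perm (Pt p n))
    (G : Subgroup (Equiv.Perm (Pt p n))) (hG : G = RL p n ⊔ RLpi p n π)
    (B : ℕ → Set (Set (Pt p n)))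
    (hBpart : ∀ i ≤ n, Setoid.IsPartition (B i))
    (hBinv : ∀ i ≤ n, ∀ g ∈ G, ∀ b ∈ B i, ⇑g '' b ∈ B i)
    (Cb : Pt p n → Set (Pt p n)) (hCb : ∀ w, Cb w ∈ B 2 ∧ w ∈ Cb w)
    (v₁ v₂ : Pt p n) (h : simRel p n G Cb v₁ v₂) :
    simRel p n G Cb v₂ v₁ := by
  have htrans : ∀ r : Pt p n, Equiv.addLeft r ∈ G :=
    fun r => hG ▸ le_sup_left (b := RLpi p n π) ⟨r, fun _ => rfl⟩
  intro hstab
  refine h fun x hx => exists_fix_apply_eq_of_addLeft_mem htrans (hstab _ ?_)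
  exact (hBpart 2 hn).add_sub_mem hCb (fun r => hBinv 2 hn _ (htrans r)) hx

/-- The relation `∼` is symmetric. -/
theorem stmt_13 (p n : ℕ) (hp : p.Prime) (hn : 2 ≤ n)
    (π : Equiv.Perm (Pt p n))
    (G : Subgroup (Equiv.Perm (Pt p n))) (hG : G = RL p n ⊔ RLpi p n π)
    (hpG : IsPGroup p ↑G)
    (B : ℕ → Set (Set (Pt p n)))
    (hBpart : ∀ i ≤ n, Setoid.IsPartition (B i))
    (hBsize : ∀ i ≤ n, ∀ b ∈ B i, Nat.card b = p ^ i)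
    (hBinv : ∀ i ≤ n, ∀ g ∈ G, ∀ b ∈ B i, ⇑g '' b ∈ B i)
    (hBref : ∀ i < n, ∀ b ∈ B i, ∃ c ∈ B (i + 1), b ⊆ c)
    (Cb : Pt p n → Set (Pt p n)) (hCb : ∀ w, Cb w ∈ B 2 ∧ w ∈ Cb w)
    (v₁ v₂ : Pt p n) (h : simRel p n G Cb v₁ v₂) :
    simRel p n G Cb v₂ v₁ :=
  stmt_13_general p n hn π G hG B hBpart hBinv Cb hCb v₁ v₂ h
end

section
/- Assume n = 4, τ_0' = τ_0, τ_1' = τ_1, and τ_0, τ_1 ∈ Z(G). Assume that for every nontrivial element σ of ⟨τ_0, τ_1⟩, some orbit of ⟨σ⟩ is not fixed setwise by τ_2⁻¹τ_2'. Then v ≁ w for every w ∈ τ_2(C_v); equivalently, τ_2(C_v) is contained in a single orbit of G_v. -/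
/-!
Translations lie in `G`, so every `G`-invariant partition `ℬ_i` consists of the cosets of a
subspace `H_i` of `𝔽_p^4` of dimension `i`, and `H_{i+1} = H_i ⊕ ⟨r_i⟩` where `τ_i` is the
translation by `r_i`. Since `G` is a `p`-group, the stabilizer `G_v` fixes each of the `p` cosets of
`H_3`, and then each of the `p` cosets of `H_2` inside `v + H_3`. As `τ_0, τ_1` are central,
translations by `H_2` commute with `G`, so the displacements `g (v + r_2) - (v + r_2)`, `g ∈ G_v`,
form a subspace `S ≤ H_2`, and `τ_2(C_v)` lies in one `G_v`-orbit exactly when `S = H_2`.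

Otherwise `S` lies on a line `⟨u⟩`. Conjugating by translations gives
`ξ (y + r_2) - ξ y - r_2 ∈ S` for every `ξ ∈ G`; with the commutation of `τ_2'` and `τ_3'` this
propagates `δ x - x ∈ S`, for `δ = τ_2⁻¹ τ_2'`, from `v` to every coset of `H_3`. Hence `δ`
preserves every orbit of the translation by `u`, which lies in `⟨τ_0, τ_1⟩`: a contradiction.
-/

open Equiv Module

theorem IsPGroup.smul_eq_self_of_card_eq {p : ℕ} [hp : Fact p.Prime] {K X : Type*} [Group K]
    [MulAction K X] (hK : IsPGroup p K) (Y : SubMulAction K X) (hY : Nat.card Y = p) {y₀ : X}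
    (hy₀ : y₀ ∈ Y) (hfix : ∀ k : K, k • y₀ = y₀) (k : K) {y : X} (hy : y ∈ Y) : k • y = y := by
  have : Finite Y := Nat.finite_of_card_ne_zero (hY ▸ hp.out.ne_zero)
  set F := MulAction.fixedPoints K Y
  have hF₀ : (⟨y₀, hy₀⟩ : Y) ∈ F := fun k => Subtype.ext (hfix k)
  have hFpos : 0 < Nat.card F := Nat.card_pos_iff.2 ⟨⟨⟨_, hF₀⟩⟩, inferInstance⟩
  have hdvd : p ∣ Nat.card F :=
    Nat.modEq_zero_iff_dvd.1 <|
      (hY ▸ hK.card_modEq_card_fixedPoints Y).symm.trans (Nat.modEq_zero_iff_dvd.2 dvd_rfl)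
  have hFuniv : F = Set.univ := by
    apply Set.eq_of_subset_of_ncard_le (Set.subset_univ _)
    rw [Set.ncard_univ, ← Nat.card_coe_set_eq, hY]
    exact Nat.le_of_dvd hFpos hdvd
  have hyF : (⟨y, hy⟩ : Y) ∈ F := hFuniv ▸ Set.mem_univ _
  exact congrArg Subtype.val (hyF k)

section Cosets

variable {R A : Type*} [Ring R] [AddCommGroup A] [Module R A]

abbrev cosetMulAction (G : Subgroup (Perm A)) (H : Submodule R A)
    (hG : ∀ g ∈ G, ∀ x y, x - y ∈ H → g x - g y ∈ H) : MulAction G (A ⧸ H) where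
  smul g := Quotient.map' g fun x y hxy => by
    rw [Submodule.quotientRel_def] at hxy ⊢
    exact hG g g.2 x y hxy
  one_smul q := Quotient.inductionOn' q fun _ => rfl
  mul_smul _ _ q := Quotient.inductionOn' q fun _ => rfl

theorem exists_mk_eq_of_sub_mem_sup {H : Submodule R A} {r v x : A} (hx : x - v ∈ H ⊔ R ∙ r) :
    ∃ c : R, (Submodule.Quotient.mk x : A ⧸ H) = Submodule.Quotient.mk (v + c • r) := by
  obtain ⟨h, hh, _, hc, hx⟩ := Submodule.mem_sup.1 hx
  obtain ⟨c, rfl⟩ := Submodule.mem_span_singleton.1 hc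
  refine ⟨c, (Submodule.Quotient.eq H).2 ?_⟩
  rwa [show x - (v + c • r) = h by rw [← sub_sub, ← hx]; abel]

end Cosets

section ZModModule

variable {p : ℕ} {A : Type*} [AddCommGroup A] [Module (ZMod p) A]

theorem natCard_range_mk_add_smul [Fact p.Prime] {H : Submodule (ZMod p) A} {r : A} (hr : r ∉ H)
    (v : A) :
    Nat.card (Set.range fun c : ZMod p => (Submodule.Quotient.mk (v + c • r) : A ⧸ H)) = p := by
  rw [Nat.card_range_of_injective, Nat.card_zmod]
  intro c c' h
  by_contra hne
  rw [Submodule.Quotient.eq, show v + c • r - (v + c' • r) = (c - c') • r by rw [sub_smul]; abel]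
    at h
  exact hr ((Submodule.smul_mem_iff H (sub_ne_zero.2 hne)).1 h)

/-- The stabilizer of `v` in `G` is a `p`-group permuting the `p` cosets of `H` that make up
`v + (H ⊔ ⟨r⟩)`, one of which is `v + H`; so it fixes all of them. -/
theorem sub_mem_of_apply_eq_self [Fact p.Prime] {G : Subgroup (Perm A)} (hG : IsPGroup p G)
    {H : Submodule (ZMod p) A} (hHG : ∀ g ∈ G, ∀ x y, x - y ∈ H → g x - g y ∈ H) {r : A}
    (hr : r ∉ H) {v : A}
    (hinv : ∀ g ∈ G, g v = v → ∀ x, x - v ∈ H ⊔ (ZMod p) ∙ r → g x - v ∈ H ⊔ (ZMod p) ∙ r)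
    {g : Perm A} (hg : g ∈ G) (hgv : g v = v) {x : A} (hx : x - v ∈ H ⊔ (ZMod p) ∙ r) :
    g x - x ∈ H := by
  let Gv := G ⊓ MulAction.stabilizer (Perm A) v
  let _ := cosetMulAction Gv H fun g hg => hHG g hg.1
  let Y : SubMulAction Gv (A ⧸ H) :=
    { carrier := Set.range fun c : ZMod p => Submodule.Quotient.mk (v + c • r)
      smul_mem' := by
        rintro ⟨g, hg, hgv⟩ _ ⟨c, rfl⟩
        have hgv : g v = v := hgv
        obtain ⟨c', hc'⟩ := exists_mk_eq_of_sub_mem_sup (hinv g hg hgv (v + c • r)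
          (by simpa using Submodule.mem_sup_right (Submodule.smul_mem _ c
            (Submodule.mem_span_singleton_self r))))
        exact ⟨c', hc'.symm⟩ }
  have hfix : ∀ k : Gv, k • (Submodule.Quotient.mk v : A ⧸ H) = Submodule.Quotient.mk v :=
    fun k => congrArg Submodule.Quotient.mk k.2.2
  obtain ⟨c, hc⟩ := exists_mk_eq_of_sub_mem_sup hx
  have := (hG.to_le inf_le_left).smul_eq_self_of_card_eq Y (natCard_range_mk_add_smul hr v)
    ⟨0, by simp⟩ hfix ⟨g, hg, hgv⟩ (y := Submodule.Quotient.mk x) ⟨c, hc.symm⟩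
  exact (Submodule.Quotient.eq H).1 this

theorem add_mem_of_mem_sup_span [NeZero p] {P : Set A} {H : Submodule (ZMod p) A} {r : A}
    (hH : ∀ h ∈ H, ∀ x ∈ P, x + h ∈ P) (hr : ∀ x ∈ P, x + r ∈ P) {h : A}
    (hh : h ∈ H ⊔ (ZMod p) ∙ r) {x : A} (hx : x ∈ P) : x + h ∈ P := by
  obtain ⟨a, ha, _, hb, rfl⟩ := Submodule.mem_sup.1 hh
  obtain ⟨c, rfl⟩ := Submodule.mem_span_singleton.1 hb
  rw [← ZMod.natCast_zmod_val c, Nat.cast_smul_eq_nsmul, ← add_assoc]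
  induction c.val with
  | zero => simpa using hH a ha x hx
  | succ n ih => simpa [succ_nsmul, add_assoc] using hr _ ih

theorem addLeft_mem_of_mem_span {K : Subgroup (Perm A)} {s : Set A}
    (hs : ∀ a ∈ s, Equiv.addLeft a ∈ K) {c : A} (hc : c ∈ Submodule.span (ZMod p) s) :
    Equiv.addLeft c ∈ K := by
  let T : AddSubgroup A :=
    { carrier := {a | Equiv.addLeft a ∈ K}
      add_mem' := fun ha hb => by simpa [Equiv.addLeft_add] using mul_mem ha hb
      zero_mem' := by simp
      neg_mem' := fun {a} (ha : Equiv.addLeft a ∈ K) => by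
        simpa [Equiv.neg_addLeft] using inv_mem ha }
  exact (Submodule.span_le (p := AddSubgroup.toZModSubmodule p T)).2 hs hc

theorem exists_sub_notMem_span_of_image_ne {K : Subgroup (Perm A)} {δ : Perm A}
    (hK : ∀ σ ∈ K, σ ≠ 1 →
      ∃ w, ⇑δ '' {x | ∃ k : ℤ, (σ ^ k) w = x} ≠ {x | ∃ k : ℤ, (σ ^ k) w = x})
    {u : A} (hu : Equiv.addLeft u ∈ K) (hu0 : u ≠ 0) : ∃ x, δ x - x ∉ (ZMod p) ∙ u := by
  obtain ⟨w, hw⟩ := hK _ hu fun h => hu0 (by simpa using congrArg (· 0) h)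
  by_contra! hδ
  refine hw ?_
  have hmem : ∀ x, x ∈ {x | ∃ k : ℤ, (Equiv.addLeft u ^ k) w = x} ↔
      x - w ∈ AddSubgroup.zmultiples u := fun x => by
    simp only [Equiv.zsmul_addLeft, Equiv.coe_addLeft, Set.mem_ofPred_eq,
      AddSubgroup.mem_zmultiples_iff, eq_sub_iff_add_eq]
  have hδ' : ∀ x, δ x - x ∈ AddSubgroup.zmultiples u := fun x => by
    obtain ⟨c, hc⟩ := Submodule.mem_span_singleton.1 (hδ x)
    exact hc ▸ ZMod.smul_mem (AddSubgroup.mem_zmultiples u) c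
  ext y
  rw [hmem]
  constructor
  · rintro ⟨x, hx, rfl⟩
    simpa using add_mem (hδ' x) ((hmem x).1 hx)
  · refine fun hy => ⟨δ⁻¹ y, (hmem _).2 ?_, δ.apply_symm_apply y⟩
    simpa using sub_mem hy (hδ' (δ⁻¹ y))

end ZModModule

theorem exists_ne_zero_le_span_singleton {K V : Type*} [Field K] [AddCommGroup V] [Module K V]
    [FiniteDimensional K V] {S T : Submodule K V} (hST : S < T) (hT : finrank K T = 2) :
    ∃ u ∈ T, u ≠ 0 ∧ S ≤ K ∙ u := by
  by_cases hS : S = ⊥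
  · obtain ⟨u, huT, hu⟩ := Submodule.exists_mem_ne_zero_of_ne_bot
      (p := T) (by rintro rfl; simp at hT)
    exact ⟨u, huT, hu, hS ▸ bot_le⟩
  · have := (Submodule.finrank_le_one_iff_isPrincipal S).1
      (by have := Submodule.finrank_lt_finrank_of_lt hST; omega)
    refine ⟨Submodule.IsPrincipal.generator S, hST.le (Submodule.IsPrincipal.generator_mem S),
      fun h => hS ?_, (Submodule.IsPrincipal.span_singleton_generator S).ge⟩
    rw [← Submodule.IsPrincipal.span_singleton_generator S, h, Submodule.span_singleton_eq_bot]

theorem finrank_eq_of_natCard_eq {p : ℕ} [hp : Fact p.Prime] {M : Type*} [AddCommGroup M]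
    [Module (ZMod p) M] [Module.Finite (ZMod p) M] {i : ℕ} (h : Nat.card M = p ^ i) :
    finrank (ZMod p) M = i :=
  Nat.pow_right_injective hp.out.two_le <| by
    show p ^ _ = p ^ i
    rw [← h, Module.natCard_eq_pow_finrank (K := ZMod p), Nat.card_zmod]

theorem eq_sup_span_singleton_of_finrank_eq_succ {K V : Type*} [DivisionRing K] [AddCommGroup V]
    [Module K V] {H H' : Submodule K V} [FiniteDimensional K H'] (hle : H ≤ H')
    (hdim : finrank K H' = finrank K H + 1) {r : V} (hr : r ∈ H') (hrH : r ∉ H) :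
    H' = H ⊔ K ∙ r := by
  have hlt : H < H ⊔ K ∙ r := lt_of_le_of_ne le_sup_left fun h =>
    hrH (by rw [h]; exact Submodule.mem_sup_right (Submodule.mem_span_singleton_self r))
  have hle' : H ⊔ K ∙ r ≤ H' := sup_le hle ((Submodule.span_singleton_le_iff_mem r H').2 hr)
  have := Submodule.finiteDimensional_of_le hle'
  refine (Submodule.eq_of_le_of_finrank_le hle' ?_).symm
  have := Submodule.finrank_lt_finrank_of_lt hlt
  omega

section Partition

variable {A : Type*} [AddCommGroup A] {P : Set (Set A)}

theorem exists_submodule_of_isPartition (p : ℕ) [Module (ZMod p) A] (hP : Setoid.IsPartition P)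
    (htr : ∀ a : A, ∀ b ∈ P, ⇑(Equiv.addLeft a) '' b ∈ P) :
    ∃ H : Submodule (ZMod p) A, (H : Set A) ∈ P ∧ ∀ b ∈ P, ∀ x ∈ b, ∀ y, y ∈ b ↔ y - x ∈ H := by
  obtain ⟨b₀, ⟨hb₀P, hb₀⟩, -⟩ := hP.2 0
  have hmem : ∀ b ∈ P, ∀ x ∈ b, ∀ y, y ∈ b ↔ y - x ∈ b₀ := by
    intro b hb x hx y
    rw [(hP.2 x).unique ⟨hb, hx⟩ ⟨htr x b₀ hb₀P, 0, hb₀, add_zero x⟩]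
    constructor
    · rintro ⟨z, hz, rfl⟩
      simpa using hz
    · exact fun h => ⟨y - x, h, by simp⟩
  let H₀ : AddSubgroup A :=
    { carrier := b₀
      add_mem' := fun {a c} ha hc => (hmem b₀ hb₀P a ha _).2 (by simpa using hc)
      zero_mem' := hb₀
      neg_mem' := fun {a} ha => by simpa using (hmem b₀ hb₀P a ha 0).1 hb₀ }
  exact ⟨AddSubgroup.toZModSubmodule p H₀, hb₀P, hmem⟩

variable {R : Type*} [Ring R] [Module R A] {H : Submodule R A}

theorem forall_image_addLeft_eq_iff (hP : Setoid.IsPartition P) (hHP : (H : Set A) ∈ P)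
    (hH : ∀ b ∈ P, ∀ x ∈ b, ∀ y, y ∈ b ↔ y - x ∈ H) {r : A} :
    (∀ b ∈ P, ⇑(Equiv.addLeft r) '' b = b) ↔ r ∈ H := by
  refine ⟨fun h => ?_, fun hr b hb => ?_⟩
  · have : r ∈ ⇑(Equiv.addLeft r) '' (H : Set A) := ⟨0, H.zero_mem, add_zero r⟩
    rwa [h _ hHP] at this
  · obtain ⟨x, hx⟩ := Set.nonempty_iff_ne_empty.2 fun h => hP.1 (h ▸ hb)
    ext y
    rw [Equiv.image_eq_preimage_symm, Set.mem_preimage, hH b hb x hx, hH b hb x hx]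
    simpa [show -r + y - x = y - x - r by abel] using Submodule.sub_mem_iff_left H hr

theorem le_of_forall_exists_subset {P' : Set (Set A)} {H' : Submodule R A}
    (hHP : (H : Set A) ∈ P) (hH' : ∀ b ∈ P', ∀ x ∈ b, ∀ y, y ∈ b ↔ y - x ∈ H')
    (href : ∀ b ∈ P, ∃ c ∈ P', b ⊆ c) : H ≤ H' := by
  obtain ⟨c, hc, hHc⟩ := href _ hHP
  intro y hy
  simpa using (hH' c hc 0 (hHc H.zero_mem) y).1 (hHc hy)

theorem sub_mem_of_forall_image_mem (hP : Setoid.IsPartition P)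
    (hH : ∀ b ∈ P, ∀ x ∈ b, ∀ y, y ∈ b ↔ y - x ∈ H) {g : Perm A} (hg : ∀ b ∈ P, ⇑g '' b ∈ P)
    {x y : A} (hxy : x - y ∈ H) : g x - g y ∈ H := by
  obtain ⟨b, ⟨hb, hyb⟩, -⟩ := hP.2 y
  exact (hH _ (hg b hb) _ ⟨y, hyb, rfl⟩ _).1 ⟨x, (hH b hb y hyb x).2 hxy, rfl⟩

end Partition

section Displacements

variable {p : ℕ} {A : Type*} [AddCommGroup A] [Module (ZMod p) A]
  {G : Subgroup (Perm A)} {H : Submodule (ZMod p) A} {v r : A}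

def displacementSubmodule (hcent : ∀ g ∈ G, ∀ h ∈ H, ∀ x, g (x + h) = g x + h)
    (hdisp : ∀ g ∈ G, g v = v → g (v + r) - (v + r) ∈ H) : Submodule (ZMod p) A :=
  AddSubgroup.toZModSubmodule p
    { carrier := {s | ∃ g ∈ G, g v = v ∧ g (v + r) = v + r + s}
      add_mem' := by
        rintro s s' ⟨g, hg, hgv, hgs⟩ ⟨g', hg', hg'v, hg's⟩
        refine ⟨g * g', mul_mem hg hg', by rw [Perm.mul_apply, hg'v, hgv], ?_⟩
        have hs' : s' ∈ H := by simpa [hg's] using hdisp g' hg' hg'v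
        rw [Perm.mul_apply, hg's, hcent g hg s' hs', hgs, add_assoc]
      zero_mem' := ⟨1, one_mem G, rfl, by simp⟩
      neg_mem' := by
        rintro s ⟨g, hg, hgv, hgs⟩
        have hs : s ∈ H := by simpa [hgs] using hdisp g hg hgv
        refine ⟨g⁻¹, inv_mem hg, by rw [Perm.inv_eq_iff_eq, hgv], ?_⟩
        rw [Perm.inv_eq_iff_eq, hcent g hg _ (neg_mem hs), hgs]
        abel }

variable {hcent : ∀ g ∈ G, ∀ h ∈ H, ∀ x, g (x + h) = g x + h}
  {hdisp : ∀ g ∈ G, g v = v → g (v + r) - (v + r) ∈ H}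

theorem displacementSubmodule_le : displacementSubmodule hcent hdisp ≤ H := by
  rintro s ⟨g, hg, hgv, hgs⟩
  simpa [hgs] using hdisp g hg hgv

/-- The witness is `ξ` conjugated by the translations taking `v` to `y` and `ξ y` to `v`. -/
theorem sub_sub_mem_displacementSubmodule (htr : ∀ a, Equiv.addLeft a ∈ G) {ξ : Perm A}
    (hξ : ξ ∈ G) (y : A) : ξ (y + r) - ξ y - r ∈ displacementSubmodule hcent hdisp := by
  refine ⟨Equiv.addLeft (v - ξ y) * ξ * Equiv.addLeft (y - v),
    mul_mem (mul_mem (htr _) hξ) (htr _), by simp [Perm.mul_apply], ?_⟩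
  simp only [Perm.mul_apply, Equiv.coe_addLeft, show y - v + (v + r) = y + r by abel]
  abel

end Displacements

section Core

variable {p : ℕ} {A : Type*} [AddCommGroup A] [Module (ZMod p) A] {G : Subgroup (Perm A)}
  {H₂ H₃ : Submodule (ZMod p) A} {v r₂ r₃ : A}

theorem sub_mem_of_commute [NeZero p] {S : Submodule (ZMod p) A} {δ₂ δ₃ : Perm A} (hSH : S ≤ H₂)
    (hcent : ∀ g ∈ G, ∀ h ∈ H₂, ∀ x, g (x + h) = g x + h)
    (hshift : ∀ g ∈ G, ∀ y, g (y + r₂) - g y - r₂ ∈ S) (hH₃ : H₃ = H₂ ⊔ (ZMod p) ∙ r₂)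
    (htop : H₃ ⊔ (ZMod p) ∙ r₃ = ⊤) (hδ₂ : δ₂ ∈ G) (hδ₂v : δ₂ v = v) (hδ₃ : δ₃ ∈ G)
    (hδ₃H : ∀ x, δ₃ x - x ∈ H₃)
    (hcomm : Commute (Equiv.addLeft r₂ * δ₂) (Equiv.addLeft r₃ * δ₃)) (x : A) :
    δ₂ x - x ∈ S := by
  let P := {y | δ₂ y - y ∈ S}
  have hPH₃ : ∀ h ∈ H₃, ∀ y ∈ P, y + h ∈ P := by
    rw [hH₃]
    refine fun h hh y hy => add_mem_of_mem_sup_span (P := P) (fun h hh y (hy : _ ∈ S) => ?_)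
      (fun y (hy : _ ∈ S) => ?_) hh hy
    · show δ₂ (y + h) - (y + h) ∈ S
      rwa [hcent δ₂ hδ₂ h hh, add_sub_add_right_eq_sub]
    · show δ₂ (y + r₂) - (y + r₂) ∈ S
      convert add_mem (hshift δ₂ hδ₂ y) hy using 1
      abel
  have hPr₃ : ∀ y ∈ P, y + r₃ ∈ P := by
    intro y (hy : δ₂ y - y ∈ S)
    -- Evaluating the commutation at `y` shows that `z = r₃ + δ₃ y ∈ y + r₃ + H₃` lies in `P`.
    have hcy := congrArg (· y) hcomm.eq
    simp only [Perm.mul_apply, Equiv.coe_addLeft] at hcy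
    have hz : r₃ + δ₃ y ∈ P := by
      have h₁ : δ₃ (r₂ + δ₂ y) = δ₃ (y + r₂) + (δ₂ y - y) := by
        rw [← hcent δ₃ hδ₃ _ (hSH hy)]
        congr 1
        abel
      show δ₂ (r₃ + δ₃ y) - (r₃ + δ₃ y) ∈ S
      rw [show δ₂ (r₃ + δ₃ y) = r₃ + δ₃ (r₂ + δ₂ y) - r₂ by rw [← hcy]; abel, h₁]
      convert add_mem (hshift δ₃ hδ₃ y) hy using 1
      abel
    convert hPH₃ _ (neg_mem (hδ₃H y)) _ hz using 1
    abel
  have hv : v ∈ P := by simp [P, hδ₂v]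
  simpa [P] using add_mem_of_mem_sup_span hPH₃ hPr₃ (htop ▸ Submodule.mem_top : x - v ∈ _) hv

theorem exists_apply_eq_of_commute [Fact p.Prime] [Finite A] {ρ₂ ρ₃ : Perm A}
    (hpG : IsPGroup p G) (htr : ∀ a, Equiv.addLeft a ∈ G)
    (hH₃G : ∀ g ∈ G, ∀ x y, x - y ∈ H₃ → g x - g y ∈ H₃)
    (hcent : ∀ g ∈ G, ∀ h ∈ H₂, ∀ x, g (x + h) = g x + h) (hH₂ : finrank (ZMod p) H₂ = 2)
    (hH₃ : H₃ = H₂ ⊔ (ZMod p) ∙ r₂) (htop : H₃ ⊔ (ZMod p) ∙ r₃ = ⊤) (hr₂ : r₂ ∉ H₂)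
    (hr₃ : r₃ ∉ H₃) (hρ₂ : ρ₂ ∈ G) (hρ₃ : ρ₃ ∈ G) (hρ₂v : ρ₂ v = r₂ + v)
    (hρ₃v : ρ₃ v = r₃ + v) (hcomm : Commute ρ₂ ρ₃)
    (hline : ∀ u ∈ H₂, u ≠ 0 → ∃ x, ((Equiv.addLeft r₂)⁻¹ * ρ₂) x - x ∉ (ZMod p) ∙ u)
    {y : A} (hy : y - (v + r₂) ∈ H₂) : ∃ g ∈ G, g v = v ∧ g (v + r₂) = y := by
  have hδ : ∀ {ρ r}, ρ ∈ G → ρ v = r + v →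
      (Equiv.addLeft r)⁻¹ * ρ ∈ G ∧ ((Equiv.addLeft r)⁻¹ * ρ) v = v := fun hρ hρv =>
    ⟨mul_mem (inv_mem (htr _)) hρ, by simp [Perm.mul_apply, hρv]⟩
  obtain ⟨hδ₂, hδ₂v⟩ := hδ hρ₂ hρ₂v
  obtain ⟨hδ₃, hδ₃v⟩ := hδ hρ₃ hρ₃v
  have hF₃ : ∀ g ∈ G, g v = v → ∀ x, g x - x ∈ H₃ := fun g hg hgv x =>
    sub_mem_of_apply_eq_self hpG hH₃G hr₃ (by simp [htop]) hg hgv (by simp [htop])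
  have hH₂G : ∀ g ∈ G, ∀ x y, x - y ∈ H₂ → g x - g y ∈ H₂ := fun g hg x y h => by
    rwa [← add_sub_cancel y x, hcent g hg _ h, add_sub_cancel_left]
  have hF₂ : ∀ g ∈ G, g v = v → g (v + r₂) - (v + r₂) ∈ H₂ := fun g hg hgv =>
    sub_mem_of_apply_eq_self hpG hH₂G hr₂
      (fun g hg hgv x hx => by
        rw [← hH₃] at hx ⊢
        simpa using add_mem (hF₃ g hg hgv x) hx)
      hg hgv (by simpa using Submodule.mem_sup_right (Submodule.mem_span_singleton_self r₂))
  let S := displacementSubmodule hcent hF₂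
  suffices H₂ ≤ S by
    obtain ⟨g, hg, hgv, hgy⟩ := this hy
    exact ⟨g, hg, hgv, by rw [hgy]; abel⟩
  by_contra hle
  have hSH₂ : S ≤ H₂ := displacementSubmodule_le
  obtain ⟨u, hu, hu0, hSu⟩ := exists_ne_zero_le_span_singleton (lt_of_le_not_ge hSH₂ hle) hH₂
  obtain ⟨x, hx⟩ := hline u hu hu0
  exact hx <| hSu <| sub_mem_of_commute hSH₂ hcent
    (fun g hg y => sub_sub_mem_displacementSubmodule htr hg y) hH₃ htop hδ₂ hδ₂v hδ₃
    (hF₃ _ hδ₃ hδ₃v) (by rwa [mul_inv_cancel_left, mul_inv_cancel_left]) x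

end Core

section Translations

variable {A : Type*} [AddCommGroup A]

theorem apply_add_eq_of_mem_closure {g : Perm A} {s : Set (Perm A)} (hs : ∀ σ ∈ s, Commute g σ)
    {h : A} (hh : Equiv.addLeft h ∈ Subgroup.closure s) (x : A) : g (x + h) = g x + h := by
  have hc : Equiv.addLeft h ∈ Subgroup.centralizer {g} := (Subgroup.closure_le _).2
    (fun σ hσ => Subgroup.mem_centralizer_singleton_iff.2 (hs σ hσ).symm) hh
  have := congrArg (· x) (Subgroup.mem_centralizer_singleton_iff.1 hc)
  simpa [Perm.mul_apply, add_comm] using this.symm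

theorem addLeft_mem_closure_of_mem {p : ℕ} [Module (ZMod p) A] {H : ℕ → Submodule (ZMod p) A}
    {τ : ℕ → Perm A} (hτ : ∀ i < 2, τ i = Equiv.addLeft (τ i 0)) (hH₀ : H 0 = ⊥)
    (hH : ∀ i < 2, H (i + 1) = H i ⊔ (ZMod p) ∙ τ i 0) {h : A} (hh : h ∈ H 2) :
    Equiv.addLeft h ∈ Subgroup.closure {τ 0, τ 1} := by
  refine addLeft_mem_of_mem_span (p := p) (s := {τ 0 0, τ 1 0}) ?_ ?_
  · rintro _ (rfl | rfl) <;> rw [← hτ _ (by norm_num)] <;> exact Subgroup.subset_closure (by simp)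
  · rwa [Submodule.span_insert, ← bot_sup_eq (ZMod p ∙ τ 0 0), ← hH₀, ← hH 0 (by norm_num),
      ← hH 1 (by norm_num)]

theorem exists_mem_apply_eq_of_forall {α : Type*} {G : Subgroup (Perm α)} {T : Set α}
    {v w₀ : α} (htrans : ∀ y ∈ T, ∃ g ∈ G, g v = v ∧ g w₀ = y) {y y' : α} (hy : y ∈ T)
    (hy' : y' ∈ T) : ∃ g ∈ G, g v = v ∧ g y = y' := by
  obtain ⟨g, hg, hgv, rfl⟩ := htrans y hy
  obtain ⟨g', hg', hg'v, rfl⟩ := htrans y' hy'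
  refine ⟨g' * g⁻¹, mul_mem hg' (inv_mem hg), ?_, by simp [Perm.mul_apply]⟩
  rw [Perm.mul_apply, Perm.inv_eq_iff_eq.2 hgv.symm, hg'v]

theorem exists_apply_eq_of_mem_image_addLeft {S : Type*} [SetLike S A] [AddSubgroupClass S A]
    {G : Subgroup (Perm A)} {H : S} {v r : A} {C : A → Set A} (hC : ∀ w, ∀ x ∈ C w, x - w ∈ H)
    (htrans : ∀ y ∈ {y | y - (v + r) ∈ H}, ∃ g ∈ G, g v = v ∧ g (v + r) = y) :
    (∀ w ∈ ⇑(Equiv.addLeft r) '' C v, ∀ x ∈ C w, ∃ g ∈ G, g v = v ∧ g w = x) ∧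
    (∀ x ∈ ⇑(Equiv.addLeft r) '' C v, ∀ y ∈ ⇑(Equiv.addLeft r) '' C v,
      ∃ g ∈ G, g v = v ∧ g x = y) := by
  have himg : ∀ w ∈ ⇑(Equiv.addLeft r) '' C v, w - (v + r) ∈ H := by
    rintro _ ⟨u, hu, rfl⟩
    simpa [add_comm, add_sub_add_comm] using hC v u hu
  exact ⟨fun w hw x hx => exists_mem_apply_eq_of_forall htrans (himg w hw)
      (by simpa using add_mem (hC w x hx) (himg w hw)),
    fun x hx y hy => exists_mem_apply_eq_of_forall htrans (himg x hx) (himg y hy)⟩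

end Translations

section RegularRepresentation

variable {p n : ℕ}

theorem addLeft_mem_RL (a : Pt p n) : Equiv.addLeft a ∈ RL p n := ⟨a, fun _ => rfl⟩

theorem eq_addLeft_of_mem_RL {σ : Perm (Pt p n)} (hσ : σ ∈ RL p n) :
    σ = Equiv.addLeft (σ 0) := by
  obtain ⟨r, hr⟩ := hσ
  ext x
  simp [hr]

theorem commute_of_mem_RLpi {π σ σ' : Perm (Pt p n)} (hσ : σ ∈ RLpi p n π)
    (hσ' : σ' ∈ RLpi p n π) : Commute σ σ' := by
  obtain ⟨ρ, hρ, rfl⟩ := hσ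
  obtain ⟨ρ', hρ', rfl⟩ := hσ'
  have := (Commute.conj_iff π⁻¹).2 (show Commute ρ ρ' by
    rw [eq_addLeft_of_mem_RL hρ, eq_addLeft_of_mem_RL hρ', Commute, SemiconjBy,
      ← Equiv.addLeft_add, ← Equiv.addLeft_add, add_comm])
  rwa [inv_inv] at this

theorem exists_blockSubmodules [Fact p.Prime] {G : Subgroup (Perm (Pt p n))}
    {B : ℕ → Set (Set (Pt p n))} {τ : ℕ → Perm (Pt p n)} (hRL : RL p n ≤ G)
    (hBpart : ∀ i ≤ n, Setoid.IsPartition (B i))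
    (hBsize : ∀ i ≤ n, ∀ b ∈ B i, Nat.card b = p ^ i)
    (hBinv : ∀ i ≤ n, ∀ g ∈ G, ∀ b ∈ B i, ⇑g '' b ∈ B i)
    (hBref : ∀ i < n, ∀ b ∈ B i, ∃ c ∈ B (i + 1), b ⊆ c)
    (hτ : ∀ i < n, τ i ∈ RL p n ∧ (∀ b ∈ B (i + 1), ⇑(τ i) '' b = b) ∧
      ¬ ∀ b ∈ B i, ⇑(τ i) '' b = b) :
    ∃ H : ℕ → Submodule (ZMod p) (Pt p n),
      (∀ i ≤ n, ∀ b ∈ B i, ∀ x ∈ b, ∀ y, y ∈ b ↔ y - x ∈ H i) ∧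
      (∀ i ≤ n, finrank (ZMod p) (H i) = i) ∧ H 0 = ⊥ ∧ H n = ⊤ ∧
      ∀ i < n, H (i + 1) = H i ⊔ (ZMod p) ∙ τ i 0 ∧ τ i 0 ∉ H i := by
  have hex : ∀ i, ∃ H : Submodule (ZMod p) (Pt p n), i ≤ n →
      (H : Set (Pt p n)) ∈ B i ∧ ∀ b ∈ B i, ∀ x ∈ b, ∀ y, y ∈ b ↔ y - x ∈ H := by
    intro i
    by_cases hi : i ≤ n
    · obtain ⟨H, hH⟩ := exists_submodule_of_isPartition p (hBpart i hi)
        fun a => hBinv i hi _ (hRL (addLeft_mem_RL a))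
      exact ⟨H, fun _ => hH⟩
    · exact ⟨⊥, fun h => absurd h hi⟩
  choose H hH using hex
  have hdim : ∀ i ≤ n, finrank (ZMod p) (H i) = i := fun i hi =>
    finrank_eq_of_natCard_eq (hBsize i hi _ (hH i hi).1)
  refine ⟨H, fun i hi => (hH i hi).2, hdim, Submodule.finrank_eq_zero.1 (hdim 0 n.zero_le),
    Submodule.eq_top_of_finrank_eq (by rw [hdim n le_rfl, Module.finrank_fin_fun]),
    fun i hi => ?_⟩
  have hfix : ∀ j ≤ n, (∀ b ∈ B j, ⇑(τ i) '' b = b) ↔ τ i 0 ∈ H j := fun j hj => by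
    have := forall_image_addLeft_eq_iff (r := τ i 0) (hBpart j hj) (hH j hj).1 (hH j hj).2
    rwa [← eq_addLeft_of_mem_RL (hτ i hi).1] at this
  have hrH := mt (hfix i hi.le).2 (hτ i hi).2.2
  refine ⟨eq_sup_span_singleton_of_finrank_eq_succ ?_ ?_ ((hfix (i + 1) hi).1 (hτ i hi).2.1) hrH,
    hrH⟩
  · exact le_of_forall_exists_subset (hH i hi.le).1 (hH (i + 1) hi).2 (hBref i hi)
  · rw [hdim i hi.le, hdim (i + 1) hi]

end RegularRepresentation

theorem stmt_16_general (p n : ℕ) (hp : p.Prime) (hn : n = 4)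
    (π : Equiv.Perm (Pt p n))
    (G : Subgroup (Equiv.Perm (Pt p n))) (hG : G = RL p n ⊔ RLpi p n π)
    (hpG : IsPGroup p ↑G)
    (B : ℕ → Set (Set (Pt p n)))
    (hBpart : ∀ i ≤ n, Setoid.IsPartition (B i))
    (hBsize : ∀ i ≤ n, ∀ b ∈ B i, Nat.card b = p ^ i)
    (hBinv : ∀ i ≤ n, ∀ g ∈ G, ∀ b ∈ B i, ⇑g '' b ∈ B i)
    (hBref : ∀ i < n, ∀ b ∈ B i, ∃ c ∈ B (i + 1), b ⊆ c)
    (τ : ℕ → Equiv.Perm (Pt p n))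
    (hτ : ∀ i < n, τ i ∈ RL p n ∧ (∀ b ∈ B (i + 1), ⇑(τ i) '' b = b) ∧
      ¬ ∀ b ∈ B i, ⇑(τ i) '' b = b)
    (v : Pt p n)
    (τ' : ℕ → Equiv.Perm (Pt p n))
    (hτ' : ∀ i < n, τ' i ∈ RLpi p n π ∧ τ' i v = τ i v)
    (hZ : ∀ g ∈ G, Commute g (τ 0) ∧ Commute g (τ 1))
    (Cb : Pt p n → Set (Pt p n)) (hCb : ∀ w, Cb w ∈ B 2 ∧ w ∈ Cb w)
    (hnofix : ∀ σ ∈ Subgroup.closure {τ 0, τ 1}, σ ≠ 1 →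
      ∃ w : Pt p n,
        ⇑((τ 2)⁻¹ * τ' 2) '' {x | ∃ k : ℤ, (σ ^ k) w = x} ≠ {x | ∃ k : ℤ, (σ ^ k) w = x})
 :
    (∀ w ∈ ⇑(τ 2) '' Cb v, ∀ x ∈ Cb w, ∃ g ∈ G, g v = v ∧ g w = x) ∧
    (∀ x ∈ ⇑(τ 2) '' Cb v, ∀ y ∈ ⇑(τ 2) '' Cb v, ∃ g ∈ G, g v = v ∧ g x = y) := by
  subst hn
  have := Fact.mk hp
  have h2 : 2 < 4 := by norm_num
  have h3 : 3 < 4 := by norm_num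
  have hRL : RL p 4 ≤ G := hG ▸ le_sup_left
  have hRLpi : RLpi p 4 π ≤ G := hG ▸ le_sup_right
  have hτeq : ∀ i < 4, τ i = Equiv.addLeft (τ i 0) := fun i hi => eq_addLeft_of_mem_RL (hτ i hi).1
  have hτ'v : ∀ i < 4, τ' i v = τ i 0 + v := fun i hi =>
    (hτ' i hi).2.trans (congrArg (· v) (hτeq i hi))
  obtain ⟨H, hHmem, hHdim, hH₀, hH₄, hHsucc⟩ :=
    exists_blockSubmodules hRL hBpart hBsize hBinv hBref hτ
  have hcl : ∀ h ∈ H 2, Equiv.addLeft h ∈ Subgroup.closure {τ 0, τ 1} := fun h =>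
    addLeft_mem_closure_of_mem (fun i hi => hτeq i (by omega)) hH₀
      fun i hi => (hHsucc i (by omega)).1
  rw [hτeq 2 h2] at hnofix ⊢
  have htrans : ∀ y ∈ {y | y - (v + τ 2 0) ∈ H 2}, ∃ g ∈ G, g v = v ∧ g (v + τ 2 0) = y :=
    fun y => exists_apply_eq_of_commute hpG (fun a => hRL (addLeft_mem_RL a))
      (fun g hg _ _ => sub_mem_of_forall_image_mem (hBpart 3 h3.le) (hHmem 3 h3.le)
        (hBinv 3 h3.le g hg))
      (fun g hg h hh => apply_add_eq_of_mem_closure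
        (by rintro _ (rfl | rfl); exacts [(hZ g hg).1, (hZ g hg).2]) (hcl h hh))
      (hHdim 2 h2.le) (hHsucc 2 h2).1 ((hHsucc 3 h3).1 ▸ hH₄) (hHsucc 2 h2).2 (hHsucc 3 h3).2
      (hRLpi (hτ' 2 h2).1) (hRLpi (hτ' 3 h3).1) (hτ'v 2 h2) (hτ'v 3 h3)
      (commute_of_mem_RLpi (hτ' 2 h2).1 (hτ' 3 h3).1)
      fun u hu hu0 => exists_sub_notMem_span_of_image_ne hnofix (hcl u hu) hu0
  exact exists_apply_eq_of_mem_image_addLeft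
    (fun w x => (hHmem 2 h2.le _ (hCb w).1 w (hCb w).2 x).1) htrans

/-- **Lemma 5.2.** If for every nontrivial `σ ∈ ⟨τ₀, τ₁⟩` some orbit of `⟨σ⟩` is not
fixed setwise by `τ₂⁻¹τ₂'`, then `v ≁ w` for every `w ∈ τ₂(C_v)`; equivalently,
`τ₂(C_v)` is contained in a single orbit of `G_v`. -/
theorem stmt_16 (p n : ℕ) (hp : p.Prime) (hn : n = 4)
    (π : Equiv.Perm (Pt p n))
    (G : Subgroup (Equiv.Perm (Pt p n))) (hG : G = RL p n ⊔ RLpi p n π)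
    (hpG : IsPGroup p ↑G)
    (B : ℕ → Set (Set (Pt p n)))
    (hBpart : ∀ i ≤ n, Setoid.IsPartition (B i))
    (hBsize : ∀ i ≤ n, ∀ b ∈ B i, Nat.card b = p ^ i)
    (hBinv : ∀ i ≤ n, ∀ g ∈ G, ∀ b ∈ B i, ⇑g '' b ∈ B i)
    (hBref : ∀ i < n, ∀ b ∈ B i, ∃ c ∈ B (i + 1), b ⊆ c)
    (τ : ℕ → Equiv.Perm (Pt p n))
    (hτ : ∀ i < n, τ i ∈ RL p n ∧ (∀ b ∈ B (i + 1), ⇑(τ i) '' b = b) ∧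
      ¬ ∀ b ∈ B i, ⇑(τ i) '' b = b)
    (v : Pt p n)
    (τ' : ℕ → Equiv.Perm (Pt p n))
    (hτ' : ∀ i < n, τ' i ∈ RLpi p n π ∧ τ' i v = τ i v)
    (hτ'0 : τ' 0 = τ 0) (hτ'1 : τ' 1 = τ 1)
    (hZ : ∀ g ∈ G, Commute g (τ 0) ∧ Commute g (τ 1))
    (Cb : Pt p n → Set (Pt p n)) (hCb : ∀ w, Cb w ∈ B 2 ∧ w ∈ Cb w)
    (hnofix : ∀ σ ∈ Subgroup.closure {τ 0, τ 1}, σ ≠ 1 →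
      ∃ w : Pt p n,
        ⇑((τ 2)⁻¹ * τ' 2) '' {x | ∃ k : ℤ, (σ ^ k) w = x} ≠ {x | ∃ k : ℤ, (σ ^ k) w = x})
 :
    (∀ w ∈ ⇑(τ 2) '' Cb v, ∀ x ∈ Cb w, ∃ g ∈ G, g v = v ∧ g w = x) ∧
    (∀ x ∈ ⇑(τ 2) '' Cb v, ∀ y ∈ ⇑(τ 2) '' Cb v, ∃ g ∈ G, g v = v ∧ g x = y) :=
  stmt_16_general p n hp hn π G hG hpG B hBpart hBsize hBinv hBref τ hτ v τ' hτ' hZ Cb hCb hnofix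
end
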